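/- Let $p$ be an odd prime, let $u$, $v$ be positive integers, and let $s$, $t$ be integers not divisible by $p$. Then for every integer $r \ge 2$: if $p \ge 5$, then $U(s;u,p^r)\,U(t;v,p^r) \equiv u v s^{-1} t^{-1} p^{2r-2} + \tfrac{1}{2}(u v s^{-1} t^{-2} + u v s^{-2} t^{-1}) p^{2r-1} \pmod{p^{2r}}$; and if $p = 3$, then $U(s;u,3^r)\,U(t;v,3^r) \equiv u v s^{-1} t^{-1} 3^{2r-2} + \tfrac{1}{2}(u v s^{-1} t^{-3}(t+1) + u v s^{-3}(s+1) t^{-1}) \, 3^{2r-1} \pmod{3^{2r}}$. Here $s^{-1}$, $t^{-1}$ etc. denote rational inverses. -/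

import Mathlib

open Finset

/-- `U(s; u, p^r) = ∑_{k=0}^{u p^{r-1} - 1} 1/(kp + s)`. -/
def U (p : ℕ) (s : ℤ) (u r : ℕ) : ℚ :=
  ∑ k ∈ Finset.range (u * p ^ (r - 1)), 1 / ((k : ℚ) * (p : ℚ) + (s : ℚ))

/-!
Write `U_r = U(s;u,p^r)` and `N = u p^{r-1}`. Splitting the range of `U_{r+1}` into the `p` blocks
`k = iN + j` and expanding `1/(a + iNp) = 1/a - iNp/a² + (iNp)²/(a²(a + iNp))` with `a = jp + s`
shows `U_{r+1} ≡ p U_r (mod p^{r+2})` for `r ≥ 2`: the first-order term carries the factors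
`Np`, `∑ i = p(p-1)/2` and `∑ 1/a² ≡ N/s² ≡ 0 (mod p)`. A second-order expansion computes `U_2`
modulo `p³`; there `∑ k² = N(N-1)(2N-1)/6` is divisible by `p` unless `p = 3`. By induction
`U_r ≡ u p^{r-1}/s + e p^r (mod p^{r+1})` with `e = u/(2s²)`, resp. `e = u(s+1)/(2s³)` if `p = 3`,
and multiplying two such congruences gives the theorem.

A congruence `x ≡ 0 (mod p^m)` between rationals with denominators prime to `p` is expressed as
`padicNorm p x ≤ (p ^ m)⁻¹`.
-/

namespace padicNorm

variable {p : ℕ} [Fact p.Prime]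

theorem padicNorm_p_pow (m : ℕ) : padicNorm p ((p : ℚ) ^ m) = ((p : ℚ) ^ m)⁻¹ := by
  rw [IsAbsoluteValue.abv_pow (padicNorm p), padicNorm_p_of_prime, inv_pow]

theorem le_inv_pow_of_eq_pow_mul_div {x : ℚ} {m : ℕ} (z w : ℤ) (hw : ¬ (p : ℤ) ∣ w)
    (hx : x = p ^ m * z / w) : padicNorm p x ≤ ((p : ℚ) ^ m)⁻¹ := by
  rw [hx, padicNorm.div, padicNorm.mul, (int_eq_one_iff w).2 hw, div_one, padicNorm_p_pow]
  exact mul_le_of_le_one_right (by positivity) (padicNorm.of_int z)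

theorem intCast_div_le_one (z w : ℤ) (hw : ¬ (p : ℤ) ∣ w) : padicNorm p (z / w) ≤ 1 := by
  simpa using le_inv_pow_of_eq_pow_mul_div (x := z / w) (m := 0) z w hw (by simp)

theorem add_le_of_le {x y t : ℚ} (hx : padicNorm p x ≤ t) (hy : padicNorm p y ≤ t) :
    padicNorm p (x + y) ≤ t :=
  padicNorm.nonarchimedean.trans (max_le hx hy)

theorem mul_le_inv_pow {x y : ℚ} {m n : ℕ} (hx : padicNorm p x ≤ ((p : ℚ) ^ m)⁻¹)
    (hy : padicNorm p y ≤ ((p : ℚ) ^ n)⁻¹) : padicNorm p (x * y) ≤ ((p : ℚ) ^ (m + n))⁻¹ := by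
  rw [padicNorm.mul, pow_add, mul_inv]
  exact mul_le_mul hx hy (padicNorm.nonneg _) (by positivity)

theorem mul_le_of_le_one {x y t : ℚ} (hx : padicNorm p x ≤ 1) (hy : padicNorm p y ≤ t) :
    padicNorm p (x * y) ≤ t := by
  rw [padicNorm.mul]
  exact (mul_le_of_le_one_left (padicNorm.nonneg _) hx).trans hy

theorem le_inv_pow_of_le {x : ℚ} {m n : ℕ} (hx : padicNorm p x ≤ ((p : ℚ) ^ m)⁻¹) (hnm : n ≤ m) :
    padicNorm p x ≤ ((p : ℚ) ^ n)⁻¹ :=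
  hx.trans <| inv_anti₀ (pow_pos (mod_cast (Fact.out : p.Prime).pos) n) <|
    pow_le_pow_right₀ (mod_cast (Fact.out : p.Prime).one_le) hnm

theorem mul_sub_mul_le {x y a b : ℚ} {m M : ℕ} (hmM : m ≤ M)
    (hxa : padicNorm p (x - a) ≤ ((p : ℚ) ^ M)⁻¹) (ha : padicNorm p a ≤ ((p : ℚ) ^ m)⁻¹)
    (hyb : padicNorm p (y - b) ≤ ((p : ℚ) ^ M)⁻¹) (hb : padicNorm p b ≤ ((p : ℚ) ^ m)⁻¹) :
    padicNorm p (x * y - a * b) ≤ ((p : ℚ) ^ (m + M))⁻¹ := by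
  rw [show x * y - a * b = (x - a) * (y - b) + a * (y - b) + (x - a) * b by ring]
  refine add_le_of_le (add_le_of_le ?_ (mul_le_inv_pow ha hyb)) ?_
  · exact le_inv_pow_of_le (mul_le_inv_pow hxa hyb) (by omega)
  · exact (mul_le_inv_pow hxa hb).trans_eq (by rw [add_comm])

theorem pow_dvd_num {x : ℚ} {m : ℕ} (hx : padicNorm p x ≤ ((p : ℚ) ^ m)⁻¹) :
    (p : ℤ) ^ m ∣ x.num := by
  have hnum : padicNorm p x.num ≤ (p : ℚ) ^ (-(m : ℤ)) := by
    rw [← Rat.mul_den_eq_num, padicNorm.mul, zpow_neg, zpow_natCast]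
    exact (mul_le_of_le_one_right (padicNorm.nonneg _) (padicNorm.of_nat _)).trans hx
  exact_mod_cast dvd_iff_norm_le.2 hnum

end padicNorm

theorem sum_range_mul_eq_sum_sum {M : Type*} [AddCommMonoid M] (f : ℕ → M) (m n : ℕ) :
    ∑ k ∈ range (m * n), f k = ∑ i ∈ range m, ∑ j ∈ range n, f (i * n + j) := by
  induction m with
  | zero => simp
  | succ m ih => rw [Nat.succ_mul, sum_range_add, ih, sum_range_succ]

theorem sum_range_natCast (n : ℕ) : ∑ k ∈ range n, (k : ℚ) = n * (n - 1) / 2 := by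
  induction n with
  | zero => simp
  | succ n ih => rw [sum_range_succ, ih]; push_cast; ring

theorem sum_range_natCast_sq (n : ℕ) :
    ∑ k ∈ range n, (k : ℚ) ^ 2 = n * (n - 1) * (2 * n - 1) / 6 := by
  induction n with
  | zero => simp
  | succ n ih => rw [sum_range_succ, ih]; push_cast; ring

theorem sum_range_mul_inv_sub (p N : ℕ) (s : ℚ) (hs : ∀ k : ℕ, (k : ℚ) * p + s ≠ 0) :
    ∑ k ∈ range (p * N), 1 / ((k : ℚ) * p + s) - p * ∑ k ∈ range N, 1 / ((k : ℚ) * p + s) =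
      -(N * p * (p * (p - 1) / 2)) * ∑ j ∈ range N, 1 / ((j : ℚ) * p + s) ^ 2 +
        ∑ i ∈ range p, ∑ j ∈ range N,
          (i * N * p) ^ 2 / (((j : ℚ) * p + s) ^ 2 * (((i * N + j : ℕ) : ℚ) * p + s)) := by
  calc _ = ∑ i ∈ range p, ∑ j ∈ range N,
        (1 / (((i * N + j : ℕ) : ℚ) * p + s) - 1 / ((j : ℚ) * p + s)) := by
        rw [sum_range_mul_eq_sum_sum, ← card_range p, ← nsmul_eq_mul, ← sum_const, card_range,
          ← sum_sub_distrib]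
        simp only [sum_sub_distrib]
    _ = ∑ i ∈ range p, ∑ j ∈ range N,
        (-((i : ℚ) * (N * p)) * (1 / ((j : ℚ) * p + s) ^ 2) +
          (i * N * p) ^ 2 / (((j : ℚ) * p + s) ^ 2 * (((i * N + j : ℕ) : ℚ) * p + s))) := by
        refine sum_congr rfl fun i _ => sum_congr rfl fun j _ => ?_
        have hj := hs j
        have hij := hs (i * N + j)
        push_cast at hij ⊢
        field_simp
        ring
    _ = _ := by
        simp only [sum_add_distrib, ← mul_sum, ← sum_mul, sum_neg_distrib, sum_range_natCast]
        ring

theorem not_dvd_mul_add {p : ℕ} {s : ℤ} (hs : ¬ (p : ℤ) ∣ s) (k : ℤ) : ¬ (p : ℤ) ∣ k * p + s :=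
  fun h => hs ((dvd_add_right (dvd_mul_left _ _)).1 h)

theorem natCast_mul_add_ne_zero {p : ℕ} {s : ℤ} (hs : ¬ (p : ℤ) ∣ s) (k : ℕ) :
    (k : ℚ) * p + s ≠ 0 := by
  intro h
  apply not_dvd_mul_add hs k
  rw [show (k : ℤ) * p + s = 0 by exact_mod_cast h]
  exact dvd_zero _

section

variable {p : ℕ} [hp : Fact p.Prime] {s : ℤ}

theorem not_dvd_two_of_odd (hodd : Odd p) : ¬ (p : ℤ) ∣ 2 := by
  intro h
  have h2 : p = 2 := (Nat.prime_dvd_prime_iff_eq hp.out Nat.prime_two).1 (by exact_mod_cast h)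
  exact Nat.not_even_iff_odd.2 hodd (h2 ▸ even_two)

theorem not_dvd_two_mul_pow (hodd : Odd p) (hs : ¬ (p : ℤ) ∣ s) (k : ℕ) :
    ¬ (p : ℤ) ∣ 2 * s ^ k :=
  (Nat.prime_iff_prime_int.mp hp.out).not_dvd_mul (not_dvd_two_of_odd hodd)
    fun h => hs ((Nat.prime_iff_prime_int.mp hp.out).dvd_of_dvd_pow h)

theorem padicNorm_sum_inv_sq_le (hs : ¬ (p : ℤ) ∣ s) {N : ℕ} (hN : p ∣ N) :
    padicNorm p (∑ j ∈ range N, 1 / ((j : ℚ) * p + s) ^ 2) ≤ ((p : ℚ) ^ 1)⁻¹ := by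
  have hpZ : Prime (p : ℤ) := Nat.prime_iff_prime_int.mp hp.out
  have hs2 : ¬ (p : ℤ) ∣ s ^ 2 := fun h => hs (hpZ.dvd_of_dvd_pow h)
  have hs0 : (s : ℚ) ≠ 0 := by simpa using natCast_mul_add_ne_zero hs 0
  obtain ⟨M, rfl⟩ := hN
  rw [show ∑ j ∈ range (p * M), 1 / ((j : ℚ) * p + s) ^ 2 =
      ∑ j ∈ range (p * M), (1 / ((j : ℚ) * p + s) ^ 2 - 1 / (s : ℚ) ^ 2) + p * M / (s : ℚ) ^ 2 by
    rw [sum_sub_distrib, sum_const, card_range, nsmul_eq_mul]; push_cast; ring]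
  refine padicNorm.add_le_of_le (padicNorm.sum_le' (fun j _ => ?_) (by positivity))
    (padicNorm.le_inv_pow_of_eq_pow_mul_div M (s ^ 2) hs2 (by push_cast; ring))
  have hj := natCast_mul_add_ne_zero hs j
  refine padicNorm.le_inv_pow_of_eq_pow_mul_div (-(j * (j * p + 2 * s))) (s ^ 2 * (j * p + s) ^ 2)
    (hpZ.not_dvd_mul hs2 fun h => not_dvd_mul_add hs j (hpZ.dvd_of_dvd_pow h)) ?_
  push_cast
  field_simp
  ring

theorem padicNorm_U_succ_sub_le (hodd : Odd p) (hs : ¬ (p : ℤ) ∣ s) (u n : ℕ) :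
    padicNorm p (U p s u (n + 3) - p * U p s u (n + 2)) ≤ ((p : ℚ) ^ (n + 4))⁻¹ := by
  have hpZ : Prime (p : ℤ) := Nat.prime_iff_prime_int.mp hp.out
  obtain ⟨w, hw⟩ := hodd
  rw [U, U, show n + 3 - 1 = n + 2 by omega, show n + 2 - 1 = n + 1 by omega,
    show u * p ^ (n + 2) = p * (u * p ^ (n + 1)) by ring]
  rw [sum_range_mul_inv_sub p _ s (natCast_mul_add_ne_zero hs)]
  refine padicNorm.add_le_of_le ?_ <| padicNorm.sum_le'
    (fun i _ => padicNorm.sum_le' (fun j _ => ?_) (by positivity)) (by positivity)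
  · have hc : padicNorm p (-(((u * p ^ (n + 1) : ℕ) : ℚ) * p * (p * (p - 1) / 2))) ≤
        ((p : ℚ) ^ (n + 3))⁻¹ :=
      padicNorm.le_inv_pow_of_eq_pow_mul_div (-(u * w)) 1 hpZ.not_dvd_one (by push_cast [hw]; ring)
    exact padicNorm.mul_le_inv_pow (m := n + 3) (n := 1) hc
      (padicNorm_sum_inv_sq_le hs (dvd_mul_of_dvd_right (dvd_pow_self p (by omega)) u))
  · have hb := not_dvd_mul_add hs (i * (u * p ^ (n + 1)) + j : ℕ)
    have hb0 := natCast_mul_add_ne_zero hs (i * (u * p ^ (n + 1)) + j)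
    have hj := natCast_mul_add_ne_zero hs j
    refine padicNorm.le_inv_pow_of_le (m := 2 * n + 4) ?_ (by omega)
    refine padicNorm.le_inv_pow_of_eq_pow_mul_div ((i * u) ^ 2)
      ((j * p + s) ^ 2 * ((i * (u * p ^ (n + 1)) + j : ℕ) * p + s))
      (hpZ.not_dvd_mul (fun h => not_dvd_mul_add hs j (hpZ.dvd_of_dvd_pow h)) hb) ?_
    push_cast at hb0 ⊢
    field_simp
    ring

theorem padicNorm_U_sub_le (hodd : Odd p) (hs : ¬ (p : ℤ) ∣ s) {u : ℕ} {e : ℚ}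
    (hbase : padicNorm p (U p s u 2 - (u * p / s + e * p ^ 2)) ≤ ((p : ℚ) ^ 3)⁻¹) (n : ℕ) :
    padicNorm p (U p s u (n + 2) - (u * p ^ (n + 1) / s + e * p ^ (n + 2))) ≤
      ((p : ℚ) ^ (n + 3))⁻¹ := by
  induction n with
  | zero => simpa using hbase
  | succ n ih =>
    have hpp : padicNorm p p ≤ ((p : ℚ) ^ 1)⁻¹ := by simp
    rw [show U p s u (n + 1 + 2) - (u * p ^ (n + 1 + 1) / s + e * p ^ (n + 1 + 2)) =
        (U p s u (n + 3) - p * U p s u (n + 2)) +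
          p * (U p s u (n + 2) - (u * p ^ (n + 1) / s + e * p ^ (n + 2))) by ring]
    exact padicNorm.add_le_of_le (padicNorm_U_succ_sub_le hodd hs u n)
      ((padicNorm.mul_le_inv_pow hpp ih).trans_eq (by ring_nf))

theorem padicNorm_U_two_sub_le (hodd : Odd p) (hs : ¬ (p : ℤ) ∣ s) (u : ℕ) :
    padicNorm p (U p s u 2 - (u * p / s + u / (2 * s ^ 2) * p ^ 2 +
      u * p ^ 3 * (u * p - 1) * (2 * u * p - 1) / (6 * s ^ 3))) ≤ ((p : ℚ) ^ 3)⁻¹ := by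
  have hpZ : Prime (p : ℤ) := Nat.prime_iff_prime_int.mp hp.out
  have hs0 : (s : ℚ) ≠ 0 := by simpa using natCast_mul_add_ne_zero hs 0
  have hsplit : U p s u 2 - (u * p / s + u / (2 * s ^ 2) * p ^ 2 +
      u * p ^ 3 * (u * p - 1) * (2 * u * p - 1) / (6 * s ^ 3)) =
      ∑ k ∈ range (u * p), (1 / ((k : ℚ) * p + s) - (1 / s - p / s ^ 2 * k + p ^ 2 / s ^ 3 * k ^ 2))
        + -(p ^ 3 * u ^ 2 / (2 * s ^ 2)) := by
    have hpoly : ∑ k ∈ range (u * p), (1 / (s : ℚ) - p / s ^ 2 * k + p ^ 2 / s ^ 3 * k ^ 2) =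
        (u : ℚ) * p / s - p / s ^ 2 * (u * p * (u * p - 1) / 2) +
          p ^ 2 / s ^ 3 * (u * p * (u * p - 1) * (2 * (u * p) - 1) / 6) := by
      simp only [sum_add_distrib, sum_sub_distrib, sum_const, card_range, nsmul_eq_mul,
        ← mul_sum, sum_range_natCast, sum_range_natCast_sq]
      push_cast
      ring
    rw [sum_sub_distrib, hpoly, U, show 2 - 1 = 1 from rfl, pow_one]
    ring
  rw [hsplit]
  refine padicNorm.add_le_of_le (padicNorm.sum_le' (fun k _ => ?_) (by positivity))
    (padicNorm.le_inv_pow_of_eq_pow_mul_div (-(u ^ 2)) (2 * s ^ 2)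
      (not_dvd_two_mul_pow hodd hs 2) (by push_cast; ring))
  have hk := natCast_mul_add_ne_zero hs k
  refine padicNorm.le_inv_pow_of_eq_pow_mul_div (-(k ^ 3)) (s ^ 3 * (k * p + s))
    (hpZ.not_dvd_mul (fun h => hs (hpZ.dvd_of_dvd_pow h)) (not_dvd_mul_add hs k)) ?_
  push_cast
  field_simp
  ring

theorem padicNorm_U_two_sub_le_of_five_le (h5 : 5 ≤ p) (hs : ¬ (p : ℤ) ∣ s) (u : ℕ) :
    padicNorm p (U p s u 2 - (u * p / s + u / (2 * s ^ 2) * p ^ 2)) ≤ ((p : ℚ) ^ 3)⁻¹ := by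
  have hpZ : Prime (p : ℤ) := Nat.prime_iff_prime_int.mp hp.out
  have h6 : ¬ (p : ℤ) ∣ 6 := fun h => by
    rcases (Nat.Prime.dvd_mul hp.out).1 (by exact_mod_cast h : p ∣ 2 * 3) with h | h <;>
      linarith [Nat.le_of_dvd (by norm_num) h]
  rw [show U p s u 2 - (u * p / s + u / (2 * s ^ 2) * p ^ 2) =
      U p s u 2 - (u * p / s + u / (2 * s ^ 2) * p ^ 2 +
        u * p ^ 3 * (u * p - 1) * (2 * u * p - 1) / (6 * s ^ 3)) +
      u * p ^ 3 * (u * p - 1) * (2 * u * p - 1) / (6 * s ^ 3) by ring]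
  refine padicNorm.add_le_of_le
    (padicNorm_U_two_sub_le (hp.out.odd_of_ne_two (by omega)) hs u) ?_
  exact padicNorm.le_inv_pow_of_eq_pow_mul_div (u * (u * p - 1) * (2 * u * p - 1)) (6 * s ^ 3)
    (hpZ.not_dvd_mul h6 fun h => hs (hpZ.dvd_of_dvd_pow h)) (by push_cast; ring)

theorem padicNorm_U_two_sub_le_of_eq_three (hp3 : p = 3) (hs : ¬ (p : ℤ) ∣ s) (u : ℕ) :
    padicNorm p (U p s u 2 - (u * p / s + u * (s + 1) / (2 * s ^ 3) * p ^ 2)) ≤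
      ((p : ℚ) ^ 3)⁻¹ := by
  have hodd : Odd p := hp3 ▸ odd_two_mul_add_one 1
  rw [show U p s u 2 - (u * p / s + u * (s + 1) / (2 * s ^ 3) * p ^ 2) =
      U p s u 2 - (u * p / s + u / (2 * s ^ 2) * p ^ 2 +
        u * p ^ 3 * (u * p - 1) * (2 * u * p - 1) / (6 * s ^ 3)) +
      (u * p ^ 3 * (u * p - 1) * (2 * u * p - 1) / (6 * s ^ 3) - u * p ^ 2 / (2 * s ^ 3)) by
    field_simp; ring]
  refine padicNorm.add_le_of_le (padicNorm_U_two_sub_le hodd hs u) ?_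
  refine padicNorm.le_inv_pow_of_le (m := 4)
    (padicNorm.le_inv_pow_of_eq_pow_mul_div (u ^ 2 * (2 * u - 1)) (2 * s ^ 3)
      (not_dvd_two_mul_pow hodd hs 3) ?_) (by omega)
  subst hp3
  push_cast
  field_simp
  ring

theorem padicNorm_U_approx_le (hs : ¬ (p : ℤ) ∣ s) (u : ℕ) {e : ℚ} (he : padicNorm p e ≤ 1)
    (n : ℕ) : padicNorm p (u * p ^ (n + 1) / s + e * p ^ (n + 2)) ≤ ((p : ℚ) ^ (n + 1))⁻¹ := by
  refine padicNorm.add_le_of_le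
    (padicNorm.le_inv_pow_of_eq_pow_mul_div u s hs (by push_cast; ring)) ?_
  exact padicNorm.mul_le_of_le_one he
    (padicNorm.le_inv_pow_of_le (padicNorm.padicNorm_p_pow (n + 2)).le (by omega))

theorem padicNorm_U_mul_U_sub_le (hodd : Odd p) (hs : ¬ (p : ℤ) ∣ s) {t : ℤ} (ht : ¬ (p : ℤ) ∣ t)
    {u v : ℕ} {e f : ℚ} (he : padicNorm p e ≤ 1) (hf : padicNorm p f ≤ 1)
    (hbs : padicNorm p (U p s u 2 - (u * p / s + e * p ^ 2)) ≤ ((p : ℚ) ^ 3)⁻¹)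
    (hbt : padicNorm p (U p t v 2 - (v * p / t + f * p ^ 2)) ≤ ((p : ℚ) ^ 3)⁻¹) (n : ℕ) :
    padicNorm p (U p s u (n + 2) * U p t v (n + 2) -
      (u * v / (s * t) * p ^ (2 * n + 2) + (u * f / s + v * e / t) * p ^ (2 * n + 3))) ≤
      ((p : ℚ) ^ (2 * n + 4))⁻¹ := by
  rw [show U p s u (n + 2) * U p t v (n + 2) -
      (u * v / (s * t) * p ^ (2 * n + 2) + (u * f / s + v * e / t) * p ^ (2 * n + 3)) =
      (U p s u (n + 2) * U p t v (n + 2) - (u * p ^ (n + 1) / s + e * p ^ (n + 2)) *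
        (v * p ^ (n + 1) / t + f * p ^ (n + 2))) + e * f * p ^ (2 * n + 4) by ring]
  refine padicNorm.add_le_of_le (padicNorm.le_inv_pow_of_le (padicNorm.mul_sub_mul_le (by omega)
    (padicNorm_U_sub_le hodd hs hbs n) (padicNorm_U_approx_le hs u he n)
    (padicNorm_U_sub_le hodd ht hbt n) (padicNorm_U_approx_le ht v hf n)) (by omega)) ?_
  exact padicNorm.mul_le_of_le_one (padicNorm.mul_le_of_le_one he hf)
    (padicNorm.padicNorm_p_pow (2 * n + 4)).le

end

theorem U_product_evaluation_general
    (p u v : ℕ) (s t : ℤ)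
    (hp : p.Prime) (hpodd : Odd p)
    (hps : ¬ (p : ℤ) ∣ s) (hpt : ¬ (p : ℤ) ∣ t) :
    ∀ r : ℕ, 2 ≤ r →
      (5 ≤ p →
        (p : ℤ) ^ (2 * r) ∣
          (U p s u r * U p t v r -
            ((u : ℚ) * (v : ℚ) * (s : ℚ)⁻¹ * (t : ℚ)⁻¹ * (p : ℚ) ^ (2 * r - 2) +
             ((u : ℚ) * (v : ℚ) * (s : ℚ)⁻¹ * ((t : ℚ) ^ 2)⁻¹ +
              (u : ℚ) * (v : ℚ) * ((s : ℚ) ^ 2)⁻¹ * (t : ℚ)⁻¹) / 2 *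
               (p : ℚ) ^ (2 * r - 1))).num) ∧
      (p = 3 →
        (3 : ℤ) ^ (2 * r) ∣
          (U 3 s u r * U 3 t v r -
            ((u : ℚ) * (v : ℚ) * (s : ℚ)⁻¹ * (t : ℚ)⁻¹ * (3 : ℚ) ^ (2 * r - 2) +
             ((u : ℚ) * (v : ℚ) * (s : ℚ)⁻¹ * ((t : ℚ) ^ 3)⁻¹ * ((t : ℚ) + 1) +
              (u : ℚ) * (v : ℚ) * ((s : ℚ) ^ 3)⁻¹ * ((s : ℚ) + 1) * (t : ℚ)⁻¹) / 2 *
               (3 : ℚ) ^ (2 * r - 1))).num) := by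
  have := Fact.mk hp
  intro r hr
  obtain ⟨n, rfl⟩ : ∃ n, r = n + 2 := ⟨r - 2, by omega⟩
  rw [show 2 * (n + 2) - 2 = 2 * n + 2 by omega, show 2 * (n + 2) - 1 = 2 * n + 3 by omega,
    show 2 * (n + 2) = 2 * n + 4 by ring]
  refine ⟨fun h5 => padicNorm.pow_dvd_num ?_, fun hp3 => ?_⟩
  · convert padicNorm_U_mul_U_sub_le hpodd hps hpt
      (by simpa using padicNorm.intCast_div_le_one u _ (not_dvd_two_mul_pow hpodd hps 2))
      (by simpa using padicNorm.intCast_div_le_one v _ (not_dvd_two_mul_pow hpodd hpt 2))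
      (padicNorm_U_two_sub_le_of_five_le h5 hps u)
      (padicNorm_U_two_sub_le_of_five_le h5 hpt v) n using 3
    ring
  · have key := padicNorm_U_mul_U_sub_le hpodd hps hpt
      (by simpa using
        padicNorm.intCast_div_le_one (u * (s + 1)) _ (not_dvd_two_mul_pow hpodd hps 3))
      (by simpa using
        padicNorm.intCast_div_le_one (v * (t + 1)) _ (not_dvd_two_mul_pow hpodd hpt 3))
      (padicNorm_U_two_sub_le_of_eq_three hp3 hps u)
      (padicNorm_U_two_sub_le_of_eq_three hp3 hpt v) n
    subst hp3
    convert padicNorm.pow_dvd_num key using 4 <;> push_cast <;> ring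

/-- **Lemma 2.3(d).** For `r ≥ 2`: if `p ≥ 5` then
`U(s;u,p^r)·U(t;v,p^r) ≡ uv s⁻¹ t⁻¹ p^{2r-2} + ½(uv s⁻¹ t⁻² + uv s⁻² t⁻¹) p^{2r-1}
(mod p^{2r})`, and if `p = 3` then
`U(s;u,3^r)·U(t;v,3^r) ≡ uv s⁻¹ t⁻¹ 3^{2r-2} + ½(uv s⁻¹ t⁻³(t+1) + uv s⁻³(s+1) t⁻¹) 3^{2r-1}
(mod 3^{2r})`. -/
theorem U_product_evaluation
    (p u v : ℕ) (s t : ℤ)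
    (hp : p.Prime) (hpodd : Odd p) (hu : 0 < u) (hv : 0 < v)
    (hps : ¬ (p : ℤ) ∣ s) (hpt : ¬ (p : ℤ) ∣ t) :
    ∀ r : ℕ, 2 ≤ r →
      (5 ≤ p →
        (p : ℤ) ^ (2 * r) ∣
          (U p s u r * U p t v r -
            ((u : ℚ) * (v : ℚ) * (s : ℚ)⁻¹ * (t : ℚ)⁻¹ * (p : ℚ) ^ (2 * r - 2) +
             ((u : ℚ) * (v : ℚ) * (s : ℚ)⁻¹ * ((t : ℚ) ^ 2)⁻¹ +
              (u : ℚ) * (v : ℚ) * ((s : ℚ) ^ 2)⁻¹ * (t : ℚ)⁻¹) / 2 *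
               (p : ℚ) ^ (2 * r - 1))).num) ∧
      (p = 3 →
        (3 : ℤ) ^ (2 * r) ∣
          (U 3 s u r * U 3 t v r -
            ((u : ℚ) * (v : ℚ) * (s : ℚ)⁻¹ * (t : ℚ)⁻¹ * (3 : ℚ) ^ (2 * r - 2) +
             ((u : ℚ) * (v : ℚ) * (s : ℚ)⁻¹ * ((t : ℚ) ^ 3)⁻¹ * ((t : ℚ) + 1) +
              (u : ℚ) * (v : ℚ) * ((s : ℚ) ^ 3)⁻¹ * ((s : ℚ) + 1) * (t : ℚ)⁻¹) / 2 *
               (3 : ℚ) ^ (2 * r - 1))).num) :=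
  U_product_evaluation_general p u v s t hp hpodd hps hpt
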